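/- For all n ≥ 0, ∑_{s=0}^{n} K₃(s) equals K₃(n+1)+2 if n ≡ 0 (mod 3), K₃(n+1)+1 if n ≡ 1 (mod 3), and K₃(n+1)−3 if n ≡ 2 (mod 3), where K₃ is the Modified third-order Jacobsthal sequence. -/
import Mathlib


def K3 : ℕ → ℤ
  | 0 => 3
  | 1 => 1
  | 2 => 3
  | n + 3 => K3 (n + 2) + K3 (n + 1) + 2 * K3 n

lemma K3aux : ∀ n : ℕ, K3 (n + 1) - 2 * K3 n =
    if n % 3 = 0 then -5 else if n % 3 = 1 then 1 else 4 := by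
  intro n
  induction n using Nat.strong_induction_on with
  | _ n ih =>
    match n with
    | 0 => simp [K3]
    | 1 => simp [K3]
    | 2 => simp [K3]
    | n + 3 =>
      have h := ih n (by omega)
      have hm : (n + 3) % 3 = n % 3 := by omega
      rw [hm, ← h]
      show K3 (n + 3 + 1) - 2 * K3 (n + 3) = _
      rw [show n + 3 + 1 = (n + 1) + 3 from rfl, K3, K3]
      ring

theorem stmt19 : ∀ n : ℕ, ∑ s ∈ Finset.range (n + 1), K3 s =
    if n % 3 = 0 then K3 (n + 1) + 2
    else if n % 3 = 1 then K3 (n + 1) + 1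
    else K3 (n + 1) - 3 := by
  intro n
  induction n with
  | zero => simp [K3]
  | succ n ih =>
    rw [Finset.sum_range_succ, ih]
    have h := K3aux (n + 1)
    have h1 : (n + 1) % 3 = (n % 3 + 1) % 3 := by omega
    rcases (show n % 3 = 0 ∨ n % 3 = 1 ∨ n % 3 = 2 by omega) with h0 | h0 | h0 <;>
      simp [h0, h1] at h ⊢ <;> omega
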